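/- arXiv:2312.05024 — 2 statements merged into one kernel-verified Lean document; each statement's English description precedes it below -/
import Mathlib

section
/- (Risk transfer across domains via weighted optimal transport.) Let (X, dist) be a metric space, let x_1,…,x_{n_s} ∈ X be source points with probability weights p ∈ ℝ^{n_s}, let y_1,…,y_{n_t} ∈ X be target points with probability weights q ∈ ℝ^{n_t}, and define D_{ij} = dist(x_i, y_j). Let l : ℝ × ℝ → ℝ be a loss function and let h, h' : X → ℝ be such that the map φ(x) = l(h(x), h'(x)) is K-Lipschitz for some K ≥ 0. Then R_q(h, h') ≤ R_p(h, h') + K · W(p, q; D), where W(p, q; D) = min_{γ ∈ B(p,q)} ⟨γ, D⟩_F. -/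
/-- `p` is a probability vector: entrywise nonnegative with entries summing to 1. -/
def IsProbVec {n : ℕ} (p : Fin n → ℝ) : Prop :=
  (∀ i, 0 ≤ p i) ∧ ∑ i, p i = 1

/-- `γ` is a coupling matrix of `p` and `q`: entrywise nonnegative, row sums `p`,
column sums `q`. -/
def IsCoupling {ns nt : ℕ} (p : Fin ns → ℝ) (q : Fin nt → ℝ)
    (γ : Matrix (Fin ns) (Fin nt) ℝ) : Prop :=
  (∀ i j, 0 ≤ γ i j) ∧ (∀ i, ∑ j, γ i j = p i) ∧ (∀ j, ∑ i, γ i j = q j)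

/-- Frobenius dot product of two matrices. -/
def frob {ns nt : ℕ} (γ D : Matrix (Fin ns) (Fin nt) ℝ) : ℝ :=
  ∑ i, ∑ j, γ i j * D i j

/-- The Wasserstein-type distance `W(p, q; D) = min_{γ ∈ B(p,q)} ⟨γ, D⟩_F`
(the minimum is attained, so it equals the infimum). -/
noncomputable def Wdist {ns nt : ℕ} (p : Fin ns → ℝ) (q : Fin nt → ℝ)
    (D : Matrix (Fin ns) (Fin nt) ℝ) : ℝ :=
  sInf {c : ℝ | ∃ γ : Matrix (Fin ns) (Fin nt) ℝ, IsCoupling p q γ ∧ frob γ D = c}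

/-- Risk transfer across domains via weighted optimal transport. -/
theorem risk_transfer {X : Type*} [MetricSpace X]
    (ns nt : ℕ) (hns : 0 < ns) (hnt : 0 < nt)
    (x : Fin ns → X) (y : Fin nt → X)
    (p : Fin ns → ℝ) (q : Fin nt → ℝ) (hp : IsProbVec p) (hq : IsProbVec q)
    (D : Matrix (Fin ns) (Fin nt) ℝ) (hD : ∀ i j, D i j = dist (x i) (y j))
    (l : ℝ → ℝ → ℝ) (h h' : X → ℝ) (K : ℝ) (hK : 0 ≤ K)
    (hLip : ∀ u v : X, |l (h u) (h' u) - l (h v) (h' v)| ≤ K * dist u v) :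
    ∑ j, q j * l (h (y j)) (h' (y j)) ≤
      (∑ i, p i * l (h (x i)) (h' (x i))) + K * Wdist p q D := by
  set φ : X → ℝ := fun u => l (h u) (h' u) with hφ
  set t : ℝ := ∑ j, q j * φ (y j) with ht
  set s : ℝ := ∑ i, p i * φ (x i) with hs
  set S : Set ℝ :=
    {c : ℝ | ∃ γ : Matrix (Fin ns) (Fin nt) ℝ, IsCoupling p q γ ∧ frob γ D = c} with hS
  -- S is nonempty via the product coupling
  have hne : S.Nonempty := by
    refine ⟨frob (fun i j => p i * q j) D, ⟨fun i j => p i * q j, ⟨?_, ?_, ?_⟩, rfl⟩⟩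
    · exact fun i j => mul_nonneg (hp.1 i) (hq.1 j)
    · intro i; rw [← Finset.mul_sum, hq.2, mul_one]
    · intro j; simp only [← Finset.sum_mul, hp.2, one_mul]
  -- key estimate: for every c ∈ S, t - s ≤ K * c
  have hkey : ∀ c ∈ S, t - s ≤ K * c := by
    rintro c ⟨γ, ⟨hnn, hrow, hcol⟩, rfl⟩
    have htγ : t = ∑ i, ∑ j, γ i j * φ (y j) := by
      rw [ht, Finset.sum_comm]
      refine Finset.sum_congr rfl fun j _ => ?_
      rw [← Finset.sum_mul, hcol j]
    have hsγ : s = ∑ i, ∑ j, γ i j * φ (x i) := by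
      refine Finset.sum_congr rfl fun i _ => ?_
      rw [← Finset.sum_mul, hrow i, mul_comm]
    rw [htγ, hsγ, ← Finset.sum_sub_distrib, frob, Finset.mul_sum]
    refine Finset.sum_le_sum fun i _ => ?_
    rw [← Finset.sum_sub_distrib, Finset.mul_sum]
    refine Finset.sum_le_sum fun j _ => ?_
    rw [← mul_sub, mul_comm K (γ i j * D i j), mul_assoc]
    refine mul_le_mul_of_nonneg_left ?_ (hnn i j)
    calc φ (y j) - φ (x i) ≤ |φ (y j) - φ (x i)| := le_abs_self _
      _ ≤ K * dist (y j) (x i) := hLip (y j) (x i)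
      _ = K * D i j := by rw [hD i j, dist_comm]
      _ = D i j * K := mul_comm K _
  have hW : t - s ≤ K * Wdist p q D := by
    rcases eq_or_lt_of_le hK with hK0 | hKpos
    · rcases hne with ⟨c, hc⟩
      have := hkey c hc
      rw [← hK0] at this ⊢
      simpa using this
    · have hlb : (t - s) / K ≤ sInf S := by
        refine le_csInf hne fun c hc => ?_
        rw [div_le_iff₀ hKpos] at *
        linarith [hkey c hc]
      have := mul_le_mul_of_nonneg_left hlb hK
      rw [mul_div_cancel₀ _ (ne_of_gt hKpos)] at this
      exact this
  linarith [hW]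
end

section
/- (Generalization bound for weighted optimal transport; discrete form of Theorem 1.) Let (X, dist) be a metric space, let x_1,…,x_{n_s} ∈ X be source points with probability weights p ∈ ℝ^{n_s}, let y_1,…,y_{n_t} ∈ X be target points with probability weights q ∈ ℝ^{n_t}, and define D_{ij} = dist(x_i, y_j). Let l : ℝ × ℝ → ℝ be a loss function that is symmetric (l(a,b) = l(b,a)) and satisfies the triangle inequality l(a,c) ≤ l(a,b) + l(b,c) for all a,b,c ∈ ℝ. Let f_s, f_t : X → ℝ be the source and target labeling functions, let h : X → ℝ be any hypothesis, and let h* : X → ℝ be any (ideal) hypothesis such that the map x ↦ l(h(x), h*(x)) is K-Lipschitz for some K ≥ 0. Then R_q(h, f_t) ≤ R_p(h, f_s) + K · W(p, q; D) + C, where C = R_p(h*, f_s) + R_q(h*, f_t) is the combined risk of the ideal hypothesis. -/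
/-- Generalization bound for weighted optimal transport (discrete form of Theorem 1):
`R_q(h, f_t) ≤ R_p(h, f_s) + K · W(p, q; D) + C` with
`C = R_p(h*, f_s) + R_q(h*, f_t)`. -/
theorem generalization_bound {X : Type*} [MetricSpace X]
    (ns nt : ℕ) (hns : 0 < ns) (hnt : 0 < nt)
    (x : Fin ns → X) (y : Fin nt → X)
    (p : Fin ns → ℝ) (q : Fin nt → ℝ) (hp : IsProbVec p) (hq : IsProbVec q)
    (D : Matrix (Fin ns) (Fin nt) ℝ) (hD : ∀ i j, D i j = dist (x i) (y j))
    (l : ℝ → ℝ → ℝ)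
    (hsymm : ∀ a b : ℝ, l a b = l b a)
    (htri : ∀ a b c : ℝ, l a c ≤ l a b + l b c)
    (fs ft : X → ℝ) (h hstar : X → ℝ) (K : ℝ) (hK : 0 ≤ K)
    (hLip : ∀ u v : X, |l (h u) (hstar u) - l (h v) (hstar v)| ≤ K * dist u v) :
    ∑ j, q j * l (h (y j)) (ft (y j)) ≤
      (∑ i, p i * l (h (x i)) (fs (x i))) + K * Wdist p q D +
        ((∑ i, p i * l (hstar (x i)) (fs (x i))) +
          ∑ j, q j * l (hstar (y j)) (ft (y j))) := by
  obtain ⟨hp0, hp1⟩ := hp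
  obtain ⟨hq0, hq1⟩ := hq
  set g : X → ℝ := fun u => l (h u) (hstar u) with hg
  -- the set of transport costs
  set S : Set ℝ := {c : ℝ | ∃ γ : Matrix (Fin ns) (Fin nt) ℝ,
      IsCoupling p q γ ∧ frob γ D = c} with hS
  -- the product coupling shows S is nonempty
  have hprod : IsCoupling p q (fun i j => p i * q j) := by
    refine ⟨fun i j => mul_nonneg (hp0 i) (hq0 j), fun i => ?_, fun j => ?_⟩
    · rw [← Finset.mul_sum, hq1, mul_one]
    · rw [← Finset.sum_mul, hp1, one_mul]
  have hSne : S.Nonempty := ⟨frob (fun i j => p i * q j) D, _, hprod, rfl⟩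
  -- key estimate: for any coupling γ, diff ≤ K * frob γ D
  have key : ∀ γ : Matrix (Fin ns) (Fin nt) ℝ, IsCoupling p q γ →
      (∑ j, q j * g (y j)) - (∑ i, p i * g (x i)) ≤ K * frob γ D := by
    intro γ ⟨hγ0, hγr, hγc⟩
    have h1 : ∑ j, q j * g (y j) = ∑ i, ∑ j, γ i j * g (y j) := by
      rw [Finset.sum_comm]
      refine Finset.sum_congr rfl fun j _ => ?_
      rw [← hγc j, Finset.sum_mul]
    have h2 : ∑ i, p i * g (x i) = ∑ i, ∑ j, γ i j * g (x i) := by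
      refine Finset.sum_congr rfl fun i _ => ?_
      rw [← hγr i, Finset.sum_mul]
    rw [h1, h2, ← Finset.sum_sub_distrib]
    have : K * frob γ D = ∑ i, ∑ j, γ i j * (K * D i j) := by
      rw [frob, Finset.mul_sum]
      refine Finset.sum_congr rfl fun i _ => ?_
      rw [Finset.mul_sum]; refine Finset.sum_congr rfl fun j _ => ?_; ring
    rw [this]
    refine Finset.sum_le_sum fun i _ => ?_
    rw [← Finset.sum_sub_distrib]
    refine Finset.sum_le_sum fun j _ => ?_
    rw [← mul_sub]
    refine mul_le_mul_of_nonneg_left ?_ (hγ0 i j)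
    have := hLip (y j) (x i)
    have h3 := (abs_le.mp this).2
    rw [hD i j, dist_comm (x i) (y j)]
    exact h3
  -- diff ≤ K * Wdist
  have hbd : (∑ j, q j * g (y j)) - (∑ i, p i * g (x i)) ≤ K * Wdist p q D := by
    rcases eq_or_lt_of_le hK with hK0 | hKpos
    · obtain ⟨c, γ, hγ, hc⟩ := hSne
      have := key γ hγ
      rw [← hK0] at this ⊢
      simpa using this
    · have hWle : ((∑ j, q j * g (y j)) - (∑ i, p i * g (x i))) / K ≤ Wdist p q D := by
        refine le_csInf hSne ?_
        rintro c ⟨γ, hγ, rfl⟩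
        exact (div_le_iff₀' hKpos).mpr (key γ hγ)
      calc (∑ j, q j * g (y j)) - (∑ i, p i * g (x i))
          = K * (((∑ j, q j * g (y j)) - (∑ i, p i * g (x i))) / K) := by
            field_simp
        _ ≤ K * Wdist p q D := mul_le_mul_of_nonneg_left hWle hK
  -- triangle inequalities
  have t1 : ∑ j, q j * l (h (y j)) (ft (y j)) ≤
      (∑ j, q j * g (y j)) + ∑ j, q j * l (hstar (y j)) (ft (y j)) := by
    rw [← Finset.sum_add_distrib]
    refine Finset.sum_le_sum fun j _ => ?_
    rw [← mul_add]
    exact mul_le_mul_of_nonneg_left (htri _ (hstar (y j)) _) (hq0 j)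
  have t2 : ∑ i, p i * g (x i) ≤
      (∑ i, p i * l (h (x i)) (fs (x i))) + ∑ i, p i * l (hstar (x i)) (fs (x i)) := by
    rw [← Finset.sum_add_distrib]
    refine Finset.sum_le_sum fun i _ => ?_
    rw [← mul_add]
    refine mul_le_mul_of_nonneg_left ?_ (hp0 i)
    calc g (x i) ≤ l (h (x i)) (fs (x i)) + l (fs (x i)) (hstar (x i)) :=
          htri _ (fs (x i)) _
      _ = l (h (x i)) (fs (x i)) + l (hstar (x i)) (fs (x i)) := by rw [hsymm (fs (x i))]
  linarith
end
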